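/- Let m \ge 1 and 0 \le s \le m - 1, and let f : (Fin m \to F_2) \to F_2 be an element of the F_2-linear span of the monomial functions e_S(v) = \prod_{i \in S} v_i over subsets S \subseteq Fin m with |S| \le s, such that f is neither the zero function nor the constant-one function. Then the Hamming weight w = |{v : f(v) = 1}| is even and satisfies 2^{m-s} \le w \le 2^m - 2^{m-s}. -/

import Mathlib

/-!
Lower bound (Plotkin's `(u | u + v)` decomposition): restricting `f ∈ RM(s+1, n+1)` to the
hyperplanes `v 0 = 0` and `v 0 = 1` gives two words of `RM(s+1, n)` whose sum lies in `RM(s, n)`.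
The weight of `f` is the sum of the weights of the halves; if the halves differ this is at least
the weight of their sum, and otherwise it is twice the weight of one half. Induction on `n` gives
weight at least `2^(n-s)` for every nonzero codeword.

Upper bound: the all-one word lies in every `RM(s, n)`, and adding it complements the weight.

Parity: for `s < n` each monomial misses a coordinate, so it sums to zero over `𝔽₂^n`; the sum of
the values of `f` is its weight modulo 2.
-/

open Finset

theorem hammingNorm_add_le {ι : Type*} [Fintype ι] {β : ι → Type*} [∀ i, AddGroup (β i)]
    [∀ i, DecidableEq (β i)] (x y : ∀ i, β i) :
    hammingNorm (x + y) ≤ hammingNorm x + hammingNorm y := by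
  calc hammingNorm (x + y) = hammingDist (-x) y := by rw [hammingDist_eq_hammingNorm, neg_neg]
    _ ≤ hammingDist (-x) 0 + hammingDist 0 y := hammingDist_triangle _ _ _
    _ = hammingNorm x + hammingNorm y := by
        rw [hammingDist_eq_hammingNorm, neg_neg, add_zero, hammingDist_zero_left]

theorem natCast_hammingNorm {ι : Type*} [Fintype ι] (f : ι → ZMod 2) :
    (hammingNorm f : ZMod 2) = ∑ i, f i := by
  rw [hammingNorm, card_filter, Nat.cast_sum]
  refine sum_congr rfl fun i _ => ?_
  generalize f i = a
  fin_cases a <;> rfl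

theorem hammingNorm_add_one_add_hammingNorm {ι : Type*} [Fintype ι] (f : ι → ZMod 2) :
    hammingNorm (f + 1) + hammingNorm f = Fintype.card ι := by
  have h : ∀ a : ZMod 2, a + 1 ≠ 0 ↔ ¬a ≠ 0 := by decide
  simp only [hammingNorm, Pi.add_apply, Pi.one_apply, h]
  rw [add_comm, card_filter_add_card_filter_not, card_univ]

theorem card_filter_eq_one_eq_hammingNorm {ι : Type*} [Fintype ι] (f : ι → ZMod 2) :
    #{i | f i = 1} = hammingNorm f := by
  have h : ∀ a : ZMod 2, a = 1 ↔ a ≠ 0 := by decide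
  simp only [hammingNorm, h]

namespace ReedMuller

variable {n s : ℕ}

def monomial (S : Finset (Fin n)) (v : Fin n → ZMod 2) : ZMod 2 := ∏ i ∈ S, v i

def code (s n : ℕ) : Submodule (ZMod 2) ((Fin n → ZMod 2) → ZMod 2) :=
  Submodule.span (ZMod 2) {g | ∃ S : Finset (Fin n), #S ≤ s ∧ g = monomial S}

lemma monomial_mem_code {S : Finset (Fin n)} (hS : #S ≤ s) : monomial S ∈ code s n :=
  Submodule.subset_span ⟨S, hS, rfl⟩

lemma monomial_empty : monomial (∅ : Finset (Fin n)) = 1 :=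
  funext fun _ => prod_empty

lemma one_mem_code : (1 : (Fin n → ZMod 2) → ZMod 2) ∈ code s n :=
  monomial_empty (n := n) ▸ monomial_mem_code (by simp)

lemma monomial_cons (S : Finset (Fin (n + 1))) (x : ZMod 2) (w : Fin n → ZMod 2) :
    monomial S (Fin.cons x w) = (if 0 ∈ S then x else 1) * monomial {i | i.succ ∈ S} w := by
  rw [monomial, monomial, prod_filter, ← univ_inter S, ← prod_ite_mem, Fin.prod_univ_succ]
  simp only [Fin.cons_zero, Fin.cons_succ, univ_inter]

lemma card_eq_ite_add_card_filter_succ_mem (S : Finset (Fin (n + 1))) :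
    #S = (if 0 ∈ S then 1 else 0) + #{i : Fin n | i.succ ∈ S} := by
  simpa using Fin.card_filter_univ_succ' (· ∈ S)

def slice (x : ZMod 2) :
    ((Fin (n + 1) → ZMod 2) → ZMod 2) →ₗ[ZMod 2] ((Fin n → ZMod 2) → ZMod 2) :=
  LinearMap.funLeft (ZMod 2) (ZMod 2) fun w => Fin.cons x w

lemma slice_monomial (x : ZMod 2) (S : Finset (Fin (n + 1))) :
    slice x (monomial S) = (if 0 ∈ S then x else 1) • monomial {i | i.succ ∈ S} :=
  funext (monomial_cons S x)

lemma code_le_comap {s' : ℕ}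
    {L : ((Fin (n + 1) → ZMod 2) → ZMod 2) →ₗ[ZMod 2] ((Fin n → ZMod 2) → ZMod 2)}
    (hL : ∀ S : Finset (Fin (n + 1)), #S ≤ s → L (monomial S) ∈ code s' n) :
    code s (n + 1) ≤ (code s' n).comap L :=
  Submodule.span_le.mpr fun _ ⟨S, hS, hg⟩ => hg ▸ hL S hS

lemma slice_mem_code {f : (Fin (n + 1) → ZMod 2) → ZMod 2} (hf : f ∈ code s (n + 1))
    (x : ZMod 2) : slice x f ∈ code s n := by
  refine code_le_comap (fun S hS => ?_) hf
  rw [slice_monomial]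
  refine Submodule.smul_mem _ _ (monomial_mem_code ?_)
  have hcard := card_eq_ite_add_card_filter_succ_mem S
  omega

lemma slice_zero_add_slice_one_mem_code {f : (Fin (n + 1) → ZMod 2) → ZMod 2}
    (hf : f ∈ code (s + 1) (n + 1)) : slice 0 f + slice 1 f ∈ code s n := by
  refine code_le_comap (L := slice 0 + slice 1) (fun S hS => ?_) hf
  have hcard := card_eq_ite_add_card_filter_succ_mem S
  rw [LinearMap.add_apply, slice_monomial, slice_monomial, ← add_smul]
  split_ifs at hcard ⊢ with h0
  · rw [zero_add, one_smul]
    exact monomial_mem_code (by omega)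
  · rw [CharTwo.add_self_eq_zero, zero_smul]
    exact Submodule.zero_mem _

lemma hammingNorm_eq_hammingNorm_slice_add (f : (Fin (n + 1) → ZMod 2) → ZMod 2) :
    hammingNorm f = hammingNorm (slice 0 f) + hammingNorm (slice 1 f) := by
  simp only [hammingNorm, card_filter]
  rw [← (Fin.consEquiv fun _ => ZMod 2).sum_comp, Fintype.sum_prod_type,
    show (univ : Finset (ZMod 2)) = {0, 1} from rfl, sum_pair zero_ne_one]
  rfl

lemma eq_zero_or_eq_one_of_mem_code_zero {f : (Fin n → ZMod 2) → ZMod 2} (hf : f ∈ code 0 n) :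
    f = 0 ∨ f = 1 := by
  have hgens : {g | ∃ S : Finset (Fin n), #S ≤ 0 ∧ g = monomial S} = {1} := by
    ext g
    simp [monomial_empty]
  rw [code, hgens, Submodule.mem_span_singleton] at hf
  obtain ⟨a, rfl⟩ := hf
  fin_cases a
  · exact .inl (zero_smul _ _)
  · exact .inr (one_smul _ _)

lemma hammingNorm_one : hammingNorm (1 : (Fin n → ZMod 2) → ZMod 2) = 2 ^ n := by
  simp [hammingNorm]

theorem pow_sub_le_hammingNorm_of_mem_code {f : (Fin n → ZMod 2) → ZMod 2} (hf : f ∈ code s n)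
    (hf0 : f ≠ 0) : 2 ^ (n - s) ≤ hammingNorm f := by
  induction n generalizing s with
  | zero => simpa [Nat.one_le_iff_ne_zero] using hammingNorm_ne_zero_iff.mpr hf0
  | succ n ih =>
    obtain _ | s := s
    · obtain rfl | rfl := eq_zero_or_eq_one_of_mem_code_zero hf
      · exact absurd rfl hf0
      · exact hammingNorm_one.ge
    rw [hammingNorm_eq_hammingNorm_slice_add]
    by_cases hd : slice 0 f + slice 1 f = 0
    · have h10 : slice 1 f = slice 0 f := (CharTwo.add_eq_zero.mp hd).symm
      have h0 : slice 0 f ≠ 0 := by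
        intro h
        apply hf0
        rw [← hammingNorm_eq_zero, hammingNorm_eq_hammingNorm_slice_add, h10, h, hammingNorm_zero]
      have hslice := ih (slice_mem_code hf 0) h0
      rw [h10]
      calc 2 ^ (n + 1 - (s + 1)) ≤ 2 ^ (n - (s + 1) + 1) :=
            Nat.pow_le_pow_right two_pos (by omega)
        _ ≤ _ := by omega
    · calc 2 ^ (n + 1 - (s + 1)) = 2 ^ (n - s) := by rw [Nat.add_sub_add_right]
        _ ≤ hammingNorm (slice 0 f + slice 1 f) := ih (slice_zero_add_slice_one_mem_code hf) hd
        _ ≤ _ := hammingNorm_add_le _ _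

lemma sum_monomial_eq_zero {S : Finset (Fin n)} (hS : #S < n) : ∑ v, monomial S v = 0 := by
  obtain ⟨j, -, hj⟩ := exists_mem_notMem_of_card_lt_card (s := S) (t := univ)
    (by rwa [card_univ, Fintype.card_fin])
  calc ∑ v, monomial S v = ∑ v : Fin n → ZMod 2, ∏ i, if i ∈ S then v i else 1 := by
        simp only [monomial, prod_ite_mem, univ_inter]
    _ = ∏ i, ∑ x : ZMod 2, if i ∈ S then x else 1 :=
        (Fintype.prod_sum fun i (x : ZMod 2) => if i ∈ S then x else 1).symm
    _ = 0 := prod_eq_zero (mem_univ j) <| by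
        simp only [hj, if_false, sum_const, card_univ, ZMod.card]
        exact CharTwo.two_nsmul (1 : ZMod 2)

lemma sum_eq_zero_of_mem_code (hs : s < n) {f : (Fin n → ZMod 2) → ZMod 2}
    (hf : f ∈ code s n) : ∑ v, f v = 0 := by
  induction hf using Submodule.span_induction with
  | mem g hg =>
    obtain ⟨S, hS, rfl⟩ := hg
    exact sum_monomial_eq_zero (by omega)
  | zero => simp
  | add g h _ _ hg hh => simp [sum_add_distrib, hg, hh]
  | smul a g _ hg => simp [← mul_sum, hg]

end ReedMuller

open ReedMuller in
/-- For `m ≥ 1` and `0 ≤ s ≤ m - 1`, every codeword of `RM(s, m)` other than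
the zero function and the constant-one function has even Hamming weight `w` with
`2^(m-s) ≤ w ≤ 2^m - 2^(m-s)`. -/
theorem rm_weight_of_nontrivial_codeword (m s : ℕ) (hm : 1 ≤ m) (hs : s ≤ m - 1)
    (f : (Fin m → ZMod 2) → ZMod 2)
    (hf : f ∈ Submodule.span (ZMod 2)
      {g : (Fin m → ZMod 2) → ZMod 2 |
        ∃ S : Finset (Fin m), S.card ≤ s ∧ g = fun v => ∏ i ∈ S, v i})
    (hf0 : f ≠ 0) (hf1 : f ≠ fun _ => 1) :
    Even (Finset.univ.filter fun v : Fin m → ZMod 2 => f v = 1).card ∧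
    2 ^ (m - s) ≤ (Finset.univ.filter fun v : Fin m → ZMod 2 => f v = 1).card ∧
    (Finset.univ.filter fun v : Fin m → ZMod 2 => f v = 1).card ≤ 2 ^ m - 2 ^ (m - s) := by
  replace hf : f ∈ code s m := hf
  have hf1' : f + 1 ≠ 0 := fun h => hf1 (CharTwo.add_eq_zero.mp h)
  have hcompl := hammingNorm_add_one_add_hammingNorm f
  have hcompl_lower := pow_sub_le_hammingNorm_of_mem_code (add_mem hf one_mem_code) hf1'
  rw [card_filter_eq_one_eq_hammingNorm]
  refine ⟨?_, pow_sub_le_hammingNorm_of_mem_code hf hf0, ?_⟩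
  · rw [← ZMod.natCast_eq_zero_iff_even, natCast_hammingNorm]
    exact sum_eq_zero_of_mem_code (by omega) hf
  · simp only [Fintype.card_fun, ZMod.card, Fintype.card_fin] at hcompl
    omega
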